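/- Let (M, d) be a metric space, and let P₁, …, Pₘ be points in M. Define the 1-median cost of a point x as f(x) = Σᵢ d(x, Pᵢ). If x* minimizes f over all of M and x̂ minimizes f over the finite set {P₁, …, Pₘ}, then f(x̂) ≤ 2·f(x*). -/
import Mathlib


open Finset

theorem one_median_best_input_two_approx
    {M : Type*} [MetricSpace M] {m : ℕ} (hm : 1 ≤ m) (P : Fin m → M)
    (f : M → ℝ) (hf : ∀ x, f x = ∑ i, dist x (P i))
    (xstar : M) (hstar : ∀ x, f xstar ≤ f x)
    (xhat : M) (hhat_mem : xhat ∈ Set.range P)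
    (hhat : ∀ i, f xhat ≤ f (P i)) :
    f xhat ≤ 2 * f xstar := by
  haveI : NeZero m := ⟨by omega⟩
  obtain ⟨i, hi⟩ := Finset.exists_min_image Finset.univ (fun i => dist xstar (P i))
    (Finset.univ_nonempty)
  have hmin : ∀ j, dist xstar (P i) ≤ dist xstar (P j) := fun j => hi.2 j (mem_univ j)
  have h1 : f (P i) ≤ 2 * f xstar := by
    rw [hf, hf]
    have : ∀ j, dist (P i) (P j) ≤ dist xstar (P i) + dist xstar (P j) := by
      intro j
      calc dist (P i) (P j) ≤ dist (P i) xstar + dist xstar (P j) := dist_triangle _ _ _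
      _ = dist xstar (P i) + dist xstar (P j) := by rw [dist_comm]
    calc ∑ j, dist (P i) (P j) ≤ ∑ j, (dist xstar (P i) + dist xstar (P j)) :=
          Finset.sum_le_sum (fun j _ => this j)
      _ = ∑ j, dist xstar (P i) + ∑ j, dist xstar (P j) := Finset.sum_add_distrib
      _ ≤ ∑ j, dist xstar (P j) + ∑ j, dist xstar (P j) := by
          gcongr with j; exact hmin j
      _ = 2 * ∑ j, dist xstar (P j) := by ring
  exact (hhat i).trans h1
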